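/- arXiv:2504.12253 — 7 statements merged into one kernel-verified Lean document; each statement's English description precedes it below -/
import Mathlib

section
/- Let a be a positive integer and define f(x) = a·x² + 4. Then there exist a prime number p and positive integers x₀ and x₁ such that (1) p does not divide f(x₀), and (2) p divides f(x₁) but p² does not divide f(x₁). -/
/-- Lemma 4.20 (`lem:prime number`): for a positive integer `a` and
`f x = a * x ^ 2 + 4`, there exist a prime `p` and positive integers
`x₀`, `x₁` such that `p ∤ f x₀`, `p ∣ f x₁` and `p ^ 2 ∤ f x₁`. -/
theorem stmt0 (a : ℕ) (ha : 0 < a) :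
    ∃ (p x₀ x₁ : ℕ), p.Prime ∧ 0 < x₀ ∧ 0 < x₁ ∧
      ¬ p ∣ (a * x₀ ^ 2 + 4) ∧
      p ∣ (a * x₁ ^ 2 + 4) ∧ ¬ p ^ 2 ∣ (a * x₁ ^ 2 + 4) := by
  -- Find a positive `c` and an odd prime `p` with `p ∣ a * c ^ 2 + 4`.
  obtain ⟨c, hc, p, hp, hp2, hpdvd⟩ :
      ∃ c, 0 < c ∧ ∃ p, p.Prime ∧ p ≠ 2 ∧ p ∣ (a * c ^ 2 + 4) := by
    rcases Nat.even_or_odd a with he | ho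
    · obtain ⟨k, hk⟩ := he
      obtain ⟨p, hp, hpd⟩ := Nat.exists_prime_and_dvd (n := a + 1) (by omega)
      refine ⟨2, by norm_num, p, hp, ?_, ?_⟩
      · rintro rfl; obtain ⟨m, hm⟩ := hpd; omega
      · have h4 : a * 2 ^ 2 + 4 = 4 * (a + 1) := by ring
        rw [h4]; exact hpd.mul_left 4
    · obtain ⟨k, hk⟩ := ho
      obtain ⟨p, hp, hpd⟩ := Nat.exists_prime_and_dvd (n := a + 4) (by omega)
      refine ⟨1, one_pos, p, hp, ?_, by simpa using hpd⟩
      · rintro rfl; obtain ⟨m, hm⟩ := hpd; omega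
  have hp4 : ¬ p ∣ 4 := by
    intro h
    have := (Nat.prime_dvd_prime_iff_eq hp Nat.prime_two).mp
      (hp.dvd_of_dvd_pow (n := 2) (by simpa using h))
    exact hp2 this
  have hpa : ¬ p ∣ a := fun h => hp4 ((Nat.dvd_add_right (h.mul_right _)).mp hpdvd)
  have hpc : ¬ p ∣ c := by
    intro h
    exact hp4 ((Nat.dvd_add_right ((h.pow (by norm_num)).mul_left a)).mp hpdvd)
  have hx0 : ¬ p ∣ (a * p ^ 2 + 4) := by
    intro h
    exact hp4 ((Nat.dvd_add_right ((dvd_pow_self p two_ne_zero).mul_left a)).mp h)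
  by_cases hsq : p ^ 2 ∣ (a * c ^ 2 + 4)
  · -- shift by p
    refine ⟨p, p, c + p, hp, hp.pos, by omega, hx0, ?_, ?_⟩
    · have heq : a * (c + p) ^ 2 + 4 = (a * c ^ 2 + 4) + p * (a * (2 * c + p)) := by ring
      rw [heq]; exact Nat.dvd_add hpdvd (Dvd.intro _ rfl)
    · intro h
      have heq : a * (c + p) ^ 2 + 4 = (a * c ^ 2 + 4) + p * (a * (2 * c + p)) := by ring
      rw [heq] at h
      have h2 : p ^ 2 ∣ p * (a * (2 * c + p)) := (Nat.dvd_add_right hsq).mp h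
      have h3 : p ∣ a * (2 * c + p) := by
        rcases h2 with ⟨m, hm⟩
        exact ⟨m, by nlinarith [hp.pos]⟩
      rcases hp.dvd_mul.mp h3 with h4 | h4
      · exact hpa h4
      · have : p ∣ 2 * c := (Nat.dvd_add_iff_left dvd_rfl).mpr h4
        rcases hp.dvd_mul.mp this with h5 | h5
        · exact hp2 ((Nat.prime_dvd_prime_iff_eq hp Nat.prime_two).mp h5)
        · exact hpc h5
  · exact ⟨p, p, c, hp, hp.pos, hc, hx0, hpdvd, hsq⟩
end

section
/- Let a be a positive integer and define f(x) = a·x² + 4. Let ℓ₀ and ℓ₁ be positive integers and let p be a prime such that p does not divide f(ℓ₀), p divides f(ℓ₁), and p² does not divide f(ℓ₁). Then the real number (ℓ₁ / ℓ₀) · √( f(ℓ₁) / f(ℓ₀) ) is irrational. -/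
/-- Irrationality criterion: if `p ∤ f ℓ₀`, `p ∣ f ℓ₁` and `p ^ 2 ∤ f ℓ₁`,
where `f x = a * x ^ 2 + 4`, then `(ℓ₁ / ℓ₀) * √(f ℓ₁ / f ℓ₀)` is irrational. -/
theorem stmt4 (a ℓ₀ ℓ₁ p : ℕ) (ha : 0 < a) (hℓ₀ : 0 < ℓ₀) (hℓ₁ : 0 < ℓ₁)
    (hp : p.Prime)
    (h0 : ¬ p ∣ (a * ℓ₀ ^ 2 + 4))
    (h1 : p ∣ (a * ℓ₁ ^ 2 + 4)) (h2 : ¬ p ^ 2 ∣ (a * ℓ₁ ^ 2 + 4)) :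
    Irrational (((ℓ₁ : ℝ) / (ℓ₀ : ℝ)) *
      Real.sqrt (((a * ℓ₁ ^ 2 + 4 : ℕ) : ℝ) / ((a * ℓ₀ ^ 2 + 4 : ℕ) : ℝ))) := by
  set m := a * ℓ₁ ^ 2 + 4 with hm
  set n := a * ℓ₀ ^ 2 + 4 with hn
  have hm0 : m ≠ 0 := by positivity
  have hn0 : n ≠ 0 := by positivity
  -- the square root is irrational
  have hq : Irrational (Real.sqrt (((m / n : ℚ) : ℝ))) := by
    rw [irrational_sqrt_ratCast_iff]
    refine ⟨?_, by positivity⟩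
    rintro ⟨r, hr⟩
    -- then m * n is a square in ℚ, hence in ℕ
    have hsq : IsSquare ((m * n : ℕ) : ℚ) := by
      refine ⟨r * n, ?_⟩
      have hmr : (m : ℚ) = (r * r) * n := by
        field_simp at hr
        linarith [hr]
      rw [Nat.cast_mul, hmr]; ring
    rw [Rat.isSquare_natCast_iff] at hsq
    obtain ⟨k, hk⟩ := hsq
    have hk0 : k ≠ 0 := by
      rintro rfl; simp [Nat.mul_eq_zero, hm0, hn0] at hk
    have hfact : (m * n).factorization p = 1 := by
      have hmn : (m * n).factorization p = m.factorization p + n.factorization p :=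
        by rw [Nat.factorization_mul hm0 hn0]; simp
      have h0' : n.factorization p = 0 := by
        simp [Nat.factorization_eq_zero_iff, h0]
      have h1' : 1 ≤ m.factorization p := by
        rw [← hp.pow_dvd_iff_le_factorization hm0]; simpa using h1
      have h2' : m.factorization p < 2 := by
        by_contra hh
        exact h2 ((hp.pow_dvd_iff_le_factorization hm0).mpr (by omega))
      omega
    have : Even ((m * n).factorization p) := by
      rw [hk, Nat.factorization_mul hk0 hk0]
      exact ⟨k.factorization p, by simp [two_mul]⟩
    rw [hfact] at this
    exact (Nat.not_even_one) this
  have hℓq : ((ℓ₁ : ℚ) / (ℓ₀ : ℚ)) ≠ 0 := by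
    have : (ℓ₁ : ℚ) ≠ 0 := by positivity
    have : (ℓ₀ : ℚ) ≠ 0 := by positivity
    positivity
  have := (hq.ratCast_mul hℓq)
  convert this using 2 <;> push_cast <;> ring
end

section
/- For every positive integer a there exist positive integers ℓ₀ and ℓ₁ such that the real number (ℓ₁ / ℓ₀) · √( (a·ℓ₁² + 4) / (a·ℓ₀² + 4) ) is irrational. -/
/-- For every positive integer `a` there are positive integers `ℓ₀`, `ℓ₁` such
that `(ℓ₁ / ℓ₀) * √((a * ℓ₁ ^ 2 + 4) / (a * ℓ₀ ^ 2 + 4))` is irrational. -/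
theorem stmt5 (a : ℕ) (ha : 0 < a) :
    ∃ ℓ₀ ℓ₁ : ℕ, 0 < ℓ₀ ∧ 0 < ℓ₁ ∧
      Irrational (((ℓ₁ : ℝ) / (ℓ₀ : ℝ)) *
        Real.sqrt (((a * ℓ₁ ^ 2 + 4 : ℕ) : ℝ) / ((a * ℓ₀ ^ 2 + 4 : ℕ) : ℝ))) := by
  refine ⟨1, 2, one_pos, two_pos, ?_⟩
  have hN : ¬ IsSquare ((a * 2 ^ 2 + 4) * (a * 1 ^ 2 + 4)) := by
    rintro ⟨k, hk⟩
    have h1 : 2 * a + 4 < k := by nlinarith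
    have h2 : k < 2 * a + 5 := by nlinarith
    omega
  have hB : (0:ℝ) < ((a * 1 ^ 2 + 4 : ℕ) : ℝ) := by positivity
  have hA : (0:ℝ) ≤ ((a * 2 ^ 2 + 4 : ℕ) : ℝ) := by positivity
  have hkey : ((2:ℕ) : ℝ) / ((1:ℕ) : ℝ) *
      Real.sqrt (((a * 2 ^ 2 + 4 : ℕ) : ℝ) / ((a * 1 ^ 2 + 4 : ℕ) : ℝ)) =
      2 * (Real.sqrt (((a * 2 ^ 2 + 4) * (a * 1 ^ 2 + 4) : ℕ) : ℝ) /
        ((a * 1 ^ 2 + 4 : ℕ) : ℝ)) := by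
    rw [Real.sqrt_div hA, Nat.cast_mul, Real.sqrt_mul hA]
    have hsB : Real.sqrt ((a * 1 ^ 2 + 4 : ℕ) : ℝ) ≠ 0 := by positivity
    rw [Nat.cast_one, Nat.cast_ofNat, div_one]
    congr 1
    rw [div_eq_div_iff hsB hB.ne', mul_assoc, Real.mul_self_sqrt hB.le]
  rw [hkey]
  have : Irrational (Real.sqrt (((a * 2 ^ 2 + 4) * (a * 1 ^ 2 + 4) : ℕ) : ℝ)) :=
    irrational_sqrt_natCast_iff.mpr hN
  exact (this.div_natCast (by positivity)).natCast_mul two_ne_zero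
end

section
/- Let n ≥ 1 and let z, w : Fin n → ℂ be families of complex numbers with z 0 = 1 and w 0 = 1. Assume that |z i| = |w i| for every index i, and that for all indices i ≠ j there exists a nonzero real number t with |z j + t·z i| = |w j + t·w i|. Then either z i = w i for all i, or z i equals the complex conjugate of w i for all i. -/
lemma key6 (a b c d : ℂ) (t : ℝ) (ht : t ≠ 0)
    (h1 : ‖a‖ = ‖c‖) (h2 : ‖b‖ = ‖d‖)
    (h3 : ‖b + (t : ℂ) * a‖ = ‖d + (t : ℂ) * c‖) :
    a.re * b.re + a.im * b.im = c.re * d.re + c.im * d.im := by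
  have e1 : a.re ^ 2 + a.im ^ 2 = c.re ^ 2 + c.im ^ 2 := by
    have h : Complex.normSq a = Complex.normSq c := by
      rw [← Complex.sq_norm, ← Complex.sq_norm, h1]
    simp only [Complex.normSq_apply] at h
    nlinarith [h]
  have e2 : b.re ^ 2 + b.im ^ 2 = d.re ^ 2 + d.im ^ 2 := by
    have h : Complex.normSq b = Complex.normSq d := by
      rw [← Complex.sq_norm, ← Complex.sq_norm, h2]
    simp only [Complex.normSq_apply] at h
    nlinarith [h]
  have e3 : (b.re + t * a.re) ^ 2 + (b.im + t * a.im) ^ 2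
      = (d.re + t * c.re) ^ 2 + (d.im + t * c.im) ^ 2 := by
    have h : Complex.normSq (b + (t : ℂ) * a) = Complex.normSq (d + (t : ℂ) * c) := by
      rw [← Complex.sq_norm, ← Complex.sq_norm, h3]
    simp only [Complex.normSq_apply, Complex.add_re, Complex.add_im,
      Complex.mul_re, Complex.mul_im, Complex.ofReal_re, Complex.ofReal_im] at h
    nlinarith [h]
  have h4 : (2 * t) * (a.re * b.re + a.im * b.im)
      = (2 * t) * (c.re * d.re + c.im * d.im) := by
    linear_combination e3 - e2 - t ^ 2 * e1
  exact mul_left_cancel₀ (by simpa using ht) h4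

/-- Linear-algebraic core of Proposition `prop:equalcentral`: two families of
complex numbers normalized at the index `0`, with equal moduli and with equal
moduli of suitable real combinations, agree or are complex conjugate. -/
theorem stmt6 (n : ℕ) (hn : 0 < n) (z w : Fin n → ℂ)
    (hz0 : z ⟨0, hn⟩ = 1) (hw0 : w ⟨0, hn⟩ = 1)
    (habs : ∀ i, ‖z i‖ = ‖w i‖)
    (hcomb : ∀ i j, i ≠ j → ∃ t : ℝ, t ≠ 0 ∧
      ‖z j + (t : ℂ) * z i‖ = ‖w j + (t : ℂ) * w i‖) :
    (∀ i, z i = w i) ∨ (∀ i, z i = (starRingEnd ℂ) (w i)) := by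
  set i0 : Fin n := ⟨0, hn⟩ with hi0
  -- dot products agree
  have hdot : ∀ i j, i ≠ j →
      (z i).re * (z j).re + (z i).im * (z j).im
        = (w i).re * (w j).re + (w i).im * (w j).im := by
    intro i j hij
    obtain ⟨t, ht, h3⟩ := hcomb i j hij
    exact key6 (z i) (z j) (w i) (w j) t ht (habs i) (habs j) h3
  -- real parts agree
  have hre : ∀ j, (z j).re = (w j).re := by
    intro j
    by_cases hj : j = i0
    · subst hj; rw [hz0, hw0]
    · have := hdot i0 j (fun h => hj h.symm)
      simpa [hz0, hw0] using this
  -- imaginary parts agree up to sign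
  have him : ∀ j, (z j).im = (w j).im ∨ (z j).im = -(w j).im := by
    intro j
    have h1 : (z j).re ^ 2 + (z j).im ^ 2 = (w j).re ^ 2 + (w j).im ^ 2 := by
      have h : Complex.normSq (z j) = Complex.normSq (w j) := by
        rw [← Complex.sq_norm, ← Complex.sq_norm, habs j]
      simp only [Complex.normSq_apply] at h
      nlinarith [h]
    have : (z j).im ^ 2 = (w j).im ^ 2 := by
      have h2 := hre j
      linear_combination h1 - ((z j).re + (w j).re) * h2
    rcases sq_eq_sq_iff_eq_or_eq_neg.mp this with h | h
    · left; exact h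
    · right; exact h
  by_cases hall : ∀ i, z i = w i
  · exact Or.inl hall
  · right
    push_neg at hall
    obtain ⟨a, ha⟩ := hall
    have haim : (z a).im = -(w a).im := by
      rcases him a with h | h
      · exact absurd (Complex.ext (hre a) h) ha
      · exact h
    have hwa : (w a).im ≠ 0 := by
      intro h
      exact ha (Complex.ext (hre a) (by rw [haim, h, neg_zero]))
    intro b
    have goalconj : (starRingEnd ℂ) (w b) = Complex.mk (w b).re (-(w b).im) := by
      apply Complex.ext <;> simp [Complex.conj_re, Complex.conj_im]
    by_cases hb : b = a
    · subst hb
      rw [goalconj]; exact Complex.ext (by simpa using hre b) (by simpa using haim)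
    · rcases him b with h | h
      · -- z b = w b; show w b is real
        have hd := hdot a b (fun h' => hb h'.symm)
        rw [hre a, hre b, haim, h] at hd
        have : (w a).im * (w b).im = 0 := by linarith
        have hwb : (w b).im = 0 := by
          rcases mul_eq_zero.mp this with h' | h'
          · exact absurd h' hwa
          · exact h'
        rw [goalconj]
        exact Complex.ext (by simpa using hre b) (by simp [h, hwb])
      · rw [goalconj]; exact Complex.ext (by simpa using hre b) (by simpa using h)
end

section
/- Let k be a field and C a k-linear abelian category. Let A be a simple object of C such that every endomorphism of A is a k-scalar multiple of the identity. Let E be an object of C and let f₁, …, f_N : A ⟶ E be morphisms that are linearly independent in the k-vector space Hom(A, E). Then the morphism A^{⊕N} ⟶ E induced by the family (f₁, …, f_N) out of the biproduct of N copies of A is a monomorphism. -/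
open CategoryTheory CategoryTheory.Limits

section Aux

variable (k : Type*) [Field k] {C : Type*} [Category C] [Abelian C] [Linear k C]

instance : HasFiniteBiproducts C := HasFiniteBiproducts.of_hasFiniteProducts

lemma stmt7_aux (A : C) [Simple A]
    (hA : ∀ f : A ⟶ A, ∃ c : k, f = c • 𝟙 A) (E : C) :
    ∀ (N : ℕ) (f : Fin N → (A ⟶ E)), LinearIndependent k f →
      Mono (biproduct.desc f) := by
  intro N
  induction N with
  | zero =>
    intro f _
    have hz : IsZero (⨁ fun _ : Fin 0 => A) := by
      rw [IsZero.iff_id_eq_zero]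
      ext j
      exact j.elim0
    exact ⟨fun g h _ => hz.eq_of_tgt g h⟩
  | succ n ih =>
    intro f hf
    -- show the kernel inclusion is zero
    apply Abelian.mono_of_kernel_ι_eq_zero
    set ι : kernel (biproduct.desc f) ⟶ ⨁ (fun _ : Fin (n+1) => A) :=
      kernel.ι (biproduct.desc f) with hι
    have hcomp : ι ≫ biproduct.desc f = 0 := kernel.condition _
    set q : kernel (biproduct.desc f) ⟶ A := ι ≫ biproduct.π _ (Fin.last n) with hq
    -- key sub-argument: any K' → ⨁ A with last component zero and composite zero is zero
    have key : ∀ {K' : C} (g : K' ⟶ ⨁ (fun _ : Fin (n+1) => A)),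
        g ≫ biproduct.π _ (Fin.last n) = 0 → g ≫ biproduct.desc f = 0 → g = 0 := by
      intro K' g hlast h0
      have hfi : LinearIndependent k (f ∘ Fin.castSucc) :=
        hf.comp Fin.castSucc (Fin.castSucc_injective n)
      haveI := ih (f ∘ Fin.castSucc) hfi
      set g' : K' ⟶ ⨁ (fun _ : Fin n => A) :=
        biproduct.lift (fun i => g ≫ biproduct.π _ (Fin.castSucc i)) with hg'
      have hg'0 : g' ≫ biproduct.desc (f ∘ Fin.castSucc) = 0 := by
        rw [hg', biproduct.lift_desc]
        have : g ≫ biproduct.desc f = ∑ i : Fin (n+1), (g ≫ biproduct.π _ i) ≫ f i := by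
          conv_lhs => rw [show g = biproduct.lift (fun i => g ≫ biproduct.π _ i) by
            ext j; simp]
          rw [biproduct.lift_desc]
        rw [show (∑ i : Fin n, (g ≫ biproduct.π (fun _ : Fin (n+1) => A) (Fin.castSucc i)) ≫
               (f ∘ Fin.castSucc) i)
            = ∑ i : Fin (n+1), (g ≫ biproduct.π _ i) ≫ f i from ?_]
        · rw [← this, h0]
        · rw [Fin.sum_univ_castSucc]
          simp [hlast]
      have : g' = 0 := by
        rw [← cancel_mono (biproduct.desc (f ∘ Fin.castSucc)), hg'0, zero_comp]
      have hcomps : ∀ i : Fin n, g ≫ biproduct.π _ (Fin.castSucc i) = 0 := by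
        intro i
        have := congrArg (fun x => x ≫ biproduct.π (fun _ : Fin n => A) i) this
        simpa [hg'] using this
      ext j
      rcases Fin.eq_castSucc_or_eq_last j with ⟨i, rfl⟩ | rfl
      · simpa using hcomps i
      · simpa using hlast
    by_cases hq0 : q = 0
    · exact key ι hq0 hcomp
    · exfalso
      haveI : Epi q := epi_of_nonzero_to_simple hq0
      haveI : Mono q := by
        apply Abelian.mono_of_kernel_ι_eq_zero
        have : kernel.ι q ≫ ι = 0 := by
          apply key
          · rw [Category.assoc, ← hq, kernel.condition]
          · rw [Category.assoc, hcomp, comp_zero]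
        rw [← cancel_mono ι, this, zero_comp]
      haveI : IsIso q := isIso_of_mono_of_epi q
      -- scalars
      have hsc : ∀ i, ∃ c : k, inv q ≫ ι ≫ biproduct.π _ i = c • 𝟙 A := fun i => hA _
      choose c hc using hsc
      have hsum : ∑ i : Fin (n+1), c i • f i = 0 := by
        have h1 : (inv q ≫ ι) ≫ biproduct.desc f = 0 := by rw [Category.assoc, hcomp, comp_zero]
        have h2 : inv q ≫ ι =
            biproduct.lift (fun i => inv q ≫ ι ≫ biproduct.π _ i) := by ext j; simp
        rw [h2, biproduct.lift_desc] at h1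
        calc ∑ i : Fin (n+1), c i • f i
            = ∑ i : Fin (n+1), (inv q ≫ ι ≫ biproduct.π _ i) ≫ f i := by
              refine Finset.sum_congr rfl fun i _ => ?_
              rw [hc i, Linear.smul_comp, Category.id_comp]
          _ = 0 := h1
      have hclast : c (Fin.last n) = 1 := by
        have h1 : inv q ≫ ι ≫ biproduct.π _ (Fin.last n) = 𝟙 A := by
          rw [← hq, IsIso.inv_hom_id]
        rw [hc (Fin.last n)] at h1
        by_contra hne
        have : (c (Fin.last n) - 1) • 𝟙 A = 0 := by
          rw [sub_smul, one_smul, h1, sub_self]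
        rw [smul_eq_zero] at this
        rcases this with h | h
        · exact hne (sub_eq_zero.mp h)
        · exact id_nonzero A h
      have := linearIndependent_iff'.mp hf Finset.univ c (by simpa using hsum)
        (Fin.last n) (Finset.mem_univ _)
      rw [hclast] at this
      exact one_ne_zero this

end Aux

/-- Injectivity of the evaluation map: if `A` is a simple object with scalar
endomorphisms and `f₁, …, f_N : A ⟶ E` are linearly independent, then the
induced morphism `A^{⊕N} ⟶ E` out of the biproduct is a monomorphism. -/
theorem stmt7 (k : Type*) [Field k] (C : Type*) [Category C] [Abelian C]
    [Linear k C] (A : C) [Simple A]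
    (hA : ∀ f : A ⟶ A, ∃ c : k, f = c • 𝟙 A)
    (E : C) (N : ℕ) (f : Fin N → (A ⟶ E)) (hf : LinearIndependent k f) :
    haveI : HasFiniteBiproducts C := HasFiniteBiproducts.of_hasFiniteProducts
    Mono (biproduct.desc f) := by
  exact stmt7_aux k A hA E N f hf
end

section
/- Let k be a field and C a k-linear abelian category. Let A be a simple object of C such that every endomorphism of A is a k-scalar multiple of the identity. Let E be an object of C and let g₁, …, g_M : E ⟶ A be morphisms that are linearly independent in the k-vector space Hom(E, A). Then the morphism E ⟶ A^{⊕M} induced by the family (g₁, …, g_M) into the biproduct of M copies of A is an epimorphism. -/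
open CategoryTheory CategoryTheory.Limits

section Aux

variable (k : Type*) [Field k] {C : Type*} [Category C] [Abelian C] [Linear k C]

theorem stmt8_aux (A : C) [Simple A]
    (hA : ∀ f : A ⟶ A, ∃ c : k, f = c • 𝟙 A)
    (E : C) : ∀ (M : ℕ) (g : Fin M → (E ⟶ A)), LinearIndependent k g →
      haveI : HasFiniteBiproducts C := HasFiniteBiproducts.of_hasFiniteProducts
      Epi (biproduct.lift g) := by
  haveI : HasFiniteBiproducts C := HasFiniteBiproducts.of_hasFiniteProducts
  intro M
  induction M with
  | zero =>
    intro g _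
    rw [Preadditive.epi_iff_cancel_zero]
    intro Z u _
    apply biproduct.hom_ext'
    intro j
    exact j.elim0
  | succ M ih =>
    intro g hg
    have hg' : LinearIndependent k (g ∘ Fin.succ) :=
      hg.comp Fin.succ (Fin.succ_injective M)
    haveI hepi' : Epi (biproduct.lift (g ∘ Fin.succ)) := ih _ hg'
    set h' : E ⟶ ⨁ (fun _ : Fin M => A) := biproduct.lift (g ∘ Fin.succ) with hh'
    set i : kernel h' ⟶ E := kernel.ι h' with hi
    have hik : ∀ m : Fin M, i ≫ g (Fin.succ m) = 0 := by
      intro m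
      have h1 : i ≫ h' ≫ biproduct.π (fun _ : Fin M => A) m = 0 := by
        rw [← Category.assoc, kernel.condition, zero_comp]
      rwa [biproduct.lift_π] at h1
    -- Step A : i ≫ g 0 ≠ 0
    have hnz : i ≫ g 0 ≠ 0 := by
      intro hz
      set t : (⨁ fun _ : Fin M => A) ⟶ A := Abelian.epiDesc h' (g 0) hz with ht
      have hfac : h' ≫ t = g 0 := Abelian.comp_epiDesc h' (g 0) hz
      choose c hc using fun m => hA (biproduct.ι (fun _ : Fin M => A) m ≫ t)
      have htsum : t = ∑ m : Fin M, c m • biproduct.π (fun _ : Fin M => A) m := by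
        conv_lhs => rw [← Category.id_comp t, ← biproduct.total]
        rw [Preadditive.sum_comp]
        refine Finset.sum_congr rfl fun m _ => ?_
        rw [Category.assoc, hc m, Linear.comp_smul, Category.comp_id]
      have hg0 : g 0 = ∑ m : Fin M, c m • g (Fin.succ m) := by
        rw [← hfac, htsum, Preadditive.comp_sum]
        refine Finset.sum_congr rfl fun m _ => ?_
        rw [Linear.comp_smul, biproduct.lift_π]
        rfl
      -- contradiction with linear independence
      set d : Fin (M + 1) → k := Fin.cons 1 (fun m => -c m) with hd
      have hsum : ∑ j : Fin (M + 1), d j • g j = 0 := by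
        rw [Fin.sum_univ_succ]
        simp only [hd, Fin.cons_zero, Fin.cons_succ, one_smul, neg_smul]
        rw [hg0, ← Finset.sum_add_distrib]
        simp
      have := Fintype.linearIndependent_iff.mp hg d hsum 0
      simp [hd] at this
    haveI hepi0 : Epi (i ≫ g 0) := epi_of_nonzero_to_simple hnz
    -- Step C : conclude
    rw [Preadditive.epi_iff_cancel_zero]
    intro Z u hu
    have hudesc : u = biproduct.desc fun j => biproduct.ι (fun _ : Fin (M + 1) => A) j ≫ u := by
      apply biproduct.hom_ext'
      intro j
      rw [biproduct.ι_desc]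
    have hsum0 : ∑ j : Fin (M + 1), g j ≫ (biproduct.ι (fun _ : Fin (M + 1) => A) j ≫ u) = 0 := by
      rw [← biproduct.lift_desc, ← hudesc]
      exact hu
    have hu0 : biproduct.ι (fun _ : Fin (M + 1) => A) 0 ≫ u = 0 := by
      have h2 : (i ≫ g 0) ≫ (biproduct.ι (fun _ : Fin (M + 1) => A) 0 ≫ u) = 0 := by
        have h3 : i ≫ ∑ j : Fin (M + 1), g j ≫ (biproduct.ι (fun _ : Fin (M + 1) => A) j ≫ u)
            = 0 := by rw [hsum0, comp_zero]
        rw [Preadditive.comp_sum, Fin.sum_univ_succ] at h3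
        have h4 : ∀ m : Fin M,
            i ≫ g (Fin.succ m) ≫ (biproduct.ι (fun _ : Fin (M + 1) => A) (Fin.succ m) ≫ u)
              = 0 := by
          intro m
          rw [← Category.assoc, hik m, zero_comp]
        rw [Finset.sum_eq_zero fun m _ => h4 m, add_zero, ← Category.assoc] at h3
        exact h3
      exact (Preadditive.epi_iff_cancel_zero _).mp hepi0 _ _ h2
    have husucc : ∀ m : Fin M, biproduct.ι (fun _ : Fin (M + 1) => A) (Fin.succ m) ≫ u = 0 := by
      have h5 : h' ≫ biproduct.desc
          (fun m : Fin M => biproduct.ι (fun _ : Fin (M + 1) => A) (Fin.succ m) ≫ u) = 0 := by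
        rw [hh', biproduct.lift_desc]
        have := hsum0
        rw [Fin.sum_univ_succ, hu0, comp_zero, zero_add] at this
        simpa using this
      have h6 := (Preadditive.epi_iff_cancel_zero _).mp hepi' _ _ h5
      intro m
      have := congrArg (fun v => biproduct.ι (fun _ : Fin M => A) m ≫ v) h6
      simpa [biproduct.ι_desc] using this
    rw [hudesc]
    apply biproduct.hom_ext'
    intro j
    rw [biproduct.ι_desc, comp_zero]
    induction j using Fin.cases with
    | zero => exact hu0
    | succ m => exact husucc m

end Aux

/-- Surjectivity of the coevaluation map: if `A` is a simple object with scalar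
endomorphisms and `g₁, …, g_M : E ⟶ A` are linearly independent, then the
induced morphism `E ⟶ A^{⊕M}` into the biproduct is an epimorphism. -/
theorem stmt8 (k : Type*) [Field k] (C : Type*) [Category C] [Abelian C]
    [Linear k C] (A : C) [Simple A]
    (hA : ∀ f : A ⟶ A, ∃ c : k, f = c • 𝟙 A)
    (E : C) (M : ℕ) (g : Fin M → (E ⟶ A)) (hg : LinearIndependent k g) :
    haveI : HasFiniteBiproducts C := HasFiniteBiproducts.of_hasFiniteProducts
    Epi (biproduct.lift g) := by
  exact stmt8_aux k A hA E M g hg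
end

section
/- Let k be a field and C a k-linear abelian category. Let A be a simple object of C such that every endomorphism of A is a k-scalar multiple of the identity, and assume that every short exact sequence 0 → B → X → A → 0 in C in which B is a finite biproduct of copies of A splits. Let E be an object of C such that Hom(A, E) is a finite-dimensional k-vector space, of dimension n. Then there exists a short exact sequence 0 → A^{⊕n} → E → F → 0 in C with Hom(A, F) = 0. -/
open CategoryTheory CategoryTheory.Limits

section Aux

variable {k : Type*} [Field k] {C : Type*} [Category C] [Abelian C]
  [Linear k C] [HasFiniteBiproducts C] {A : C} [Simple A]

/-- Lifting lemma: given a short exact sequence `0 → A^{⊕m} → E → F → 0` and the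
splitting hypothesis, every `g : A ⟶ F` lifts to `E`. -/
lemma stmt9_lift
    (hsplit : ∀ (m : ℕ) (X : C) (i : (⨁ fun _ : Fin m => A) ⟶ X) (π : X ⟶ A)
      (w : i ≫ π = 0), (ShortComplex.mk i π w).ShortExact →
        ∃ s : A ⟶ X, s ≫ π = 𝟙 A)
    (m : ℕ) {E F : C} (b : (⨁ fun _ : Fin m => A) ⟶ E) (π : E ⟶ F)
    (w : b ≫ π = 0) (hSE : (ShortComplex.mk b π w).ShortExact) (g : A ⟶ F) :
    ∃ l : A ⟶ E, l ≫ π = g := by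
  haveI := hSE.mono_f
  haveI := hSE.epi_g
  let fst : pullback π g ⟶ E := pullback.fst π g
  let snd : pullback π g ⟶ A := pullback.snd π g
  have hw' : b ≫ π = 0 ≫ g := by rw [w, zero_comp]
  let i' : (⨁ fun _ : Fin m => A) ⟶ pullback π g := pullback.lift b 0 hw'
  have hi'fst : i' ≫ fst = b := pullback.lift_fst _ _ _
  have hi'snd : i' ≫ snd = 0 := pullback.lift_snd _ _ _
  haveI : Mono i' := by
    have : Mono (i' ≫ fst) := by rw [hi'fst]; infer_instance
    exact mono_of_mono i' fst
  have hlim : IsLimit (KernelFork.ofι i' hi'snd) := by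
    refine KernelFork.IsLimit.ofι' i' hi'snd (fun {T} t ht => ?_)
    have h1 : (t ≫ fst) ≫ π = 0 := by
      rw [Category.assoc, pullback.condition, ← Category.assoc, ht, zero_comp]
    refine ⟨hSE.exact.lift (t ≫ fst) h1, ?_⟩
    apply pullback.hom_ext
    · exact (Category.assoc _ _ _).trans ((congrArg (fun x => _ ≫ x) hi'fst).trans
        (hSE.exact.lift_f (t ≫ fst) h1))
    · simp only [Category.assoc]
      rw [show pullback.lift b 0 hw' ≫ pullback.snd π g = 0 from hi'snd, comp_zero]
      exact ht.symm
  have hexact : (ShortComplex.mk i' snd hi'snd).Exact :=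
    ShortComplex.exact_of_f_is_kernel _ hlim
  haveI : Epi snd := by dsimp only [snd]; infer_instance
  have hSE' : (ShortComplex.mk i' snd hi'snd).ShortExact :=
    ShortComplex.ShortExact.mk' hexact inferInstance inferInstance
  obtain ⟨s, hs⟩ := hsplit m (pullback π g) i' snd hi'snd hSE'
  refine ⟨s ≫ fst, ?_⟩
  rw [Category.assoc, pullback.condition, ← Category.assoc, hs, Category.id_comp]

lemma stmt9_main
    (hA : ∀ f : A ⟶ A, ∃ c : k, f = c • 𝟙 A)
    (hsplit : ∀ (m : ℕ) (X : C) (i : (⨁ fun _ : Fin m => A) ⟶ X) (π : X ⟶ A)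
      (w : i ≫ π = 0), (ShortComplex.mk i π w).ShortExact →
        ∃ s : A ⟶ X, s ≫ π = 𝟙 A) :
    ∀ (n : ℕ) (E : C) [FiniteDimensional k (A ⟶ E)],
      n = Module.finrank k (A ⟶ E) →
      ∃ (F : C) (ι : (⨁ fun _ : Fin n => A) ⟶ E) (π : E ⟶ F) (w : ι ≫ π = 0),
        (ShortComplex.mk ι π w).ShortExact ∧ ∀ g : A ⟶ F, g = 0 := by
  intro n
  induction n with
  | zero =>
    intro E _ hn
    have hZ : IsZero (⨁ fun _ : Fin 0 => A) := by
      rw [IsZero.iff_id_eq_zero]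
      apply biproduct.hom_ext
      intro j; exact j.elim0
    have w0 : (0 : (⨁ fun _ : Fin 0 => A) ⟶ E) ≫ 𝟙 E = 0 := by simp
    refine ⟨E, 0, 𝟙 E, w0, ?_, ?_⟩
    · haveI : Mono (0 : (⨁ fun _ : Fin 0 => A) ⟶ E) :=
        Preadditive.mono_of_cancel_zero _ (fun g _ => hZ.eq_of_tgt g 0)
      exact ShortComplex.ShortExact.mk'
        ((ShortComplex.exact_iff_mono _ rfl).mpr (by dsimp; infer_instance))
        inferInstance inferInstance
    · intro g
      haveI : Subsingleton (A ⟶ E) := Module.finrank_zero_iff.mp hn.symm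
      exact Subsingleton.elim g 0
  | succ n ih =>
    intro E _ hn
    -- pick a nonzero map f : A ⟶ E
    haveI : Nontrivial (A ⟶ E) := by
      apply Module.nontrivial_of_finrank_pos (R := k)
      omega
    obtain ⟨f, hf⟩ := exists_ne (0 : A ⟶ E)
    haveI : Mono f := mono_of_nonzero_from_simple hf
    set F' := cokernel f with hF'
    set π' := cokernel.π f with hπ'
    have wf : f ≫ π' = 0 := cokernel.condition f
    -- f is the kernel of π'
    have hker1 : IsLimit (KernelFork.ofι f wf) :=
      Abelian.monoIsKernelOfCokernel (CokernelCofork.ofπ (cokernel.π f) (cokernel.condition f))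
        (cokernelIsCokernel f)
    have hexact1 : (ShortComplex.mk f π' wf).Exact :=
      ShortComplex.exact_of_f_is_kernel _ hker1
    have hSE1 : (ShortComplex.mk f π' wf).ShortExact :=
      ShortComplex.ShortExact.mk' hexact1 inferInstance inferInstance
    -- iso ⨁ Fin 1 A ≅ A
    let e1 : (⨁ fun _ : Fin 1 => A) ≅ A :=
      { hom := biproduct.π (fun _ : Fin 1 => A) 0
        inv := biproduct.ι (fun _ : Fin 1 => A) 0
        hom_inv_id := by
          apply biproduct.hom_ext'
          intro j
          fin_cases j
          simp
        inv_hom_id := by simp }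
    have wb1 : (e1.hom ≫ f) ≫ π' = 0 := by rw [Category.assoc, wf, comp_zero]
    have hSE1' : (ShortComplex.mk (e1.hom ≫ f) π' wb1).ShortExact := by
      refine ShortComplex.shortExact_of_iso ?_ hSE1
      exact ShortComplex.isoMk e1.symm (Iso.refl _) (Iso.refl _)
        (by simp [e1]) (by simp)
    -- surjectivity of composition with π'
    have hsurj : ∀ g : A ⟶ F', ∃ l : A ⟶ E, l ≫ π' = g :=
      fun g => stmt9_lift hsplit 1 (e1.hom ≫ f) π' wb1 hSE1' g
    let Φ : (A ⟶ E) →ₗ[k] (A ⟶ F') := Linear.rightComp k A π'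
    have hΦ : ∀ g : A ⟶ E, Φ g = g ≫ π' := fun g => rfl
    have hΦsurj : Function.Surjective Φ := fun g => hsurj g
    haveI : FiniteDimensional k (A ⟶ F') := Module.Finite.of_surjective Φ hΦsurj
    have hkerΦ : LinearMap.ker Φ = Submodule.span k {f} := by
      ext g
      rw [LinearMap.mem_ker, Submodule.mem_span_singleton, hΦ]
      constructor
      · intro hg
        obtain ⟨h, hh⟩ := hexact1.lift' g hg
        obtain ⟨c, hc⟩ := hA h
        refine ⟨c, ?_⟩
        rw [← hh, hc, Linear.smul_comp, Category.id_comp]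
      · rintro ⟨c, rfl⟩
        rw [Linear.smul_comp, wf, smul_zero]
    have hrank : n = Module.finrank k (A ⟶ F') := by
      have h1 := LinearMap.finrank_range_add_finrank_ker Φ
      rw [LinearMap.range_eq_top.mpr hΦsurj, finrank_top, hkerΦ,
        finrank_span_singleton hf, ← hn] at h1
      omega
    -- apply the induction hypothesis to F'
    obtain ⟨F, ι', π'', w'', hSE', hF⟩ := ih F' hrank
    haveI := hSE'.mono_f
    haveI := hSE'.epi_g
    -- lift the components of ι'
    have hlift : ∀ i : Fin n, ∃ l : A ⟶ E, l ≫ π' = biproduct.ι (fun _ : Fin n => A) i ≫ ι' :=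
      fun i => hsurj _
    choose gh hgh using hlift
    let ghat : (⨁ fun _ : Fin n => A) ⟶ E := biproduct.desc gh
    have hghat : ghat ≫ π' = ι' := by
      apply biproduct.hom_ext'
      intro i
      rw [← Category.assoc]
      simp [ghat, hgh i]
    -- the combined inclusion and projection
    let comps : ∀ j : Fin (n + 1), A ⟶ E := fun j => Fin.cases f (fun i => gh i) j
    let ι : (⨁ fun _ : Fin (n + 1) => A) ⟶ E := biproduct.desc comps
    let π : E ⟶ F := π' ≫ π''
    have w : ι ≫ π = 0 := by
      apply biproduct.hom_ext'
      intro j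
      rw [← Category.assoc, comp_zero]
      induction j using Fin.cases with
      | zero =>
        simp only [ι, biproduct.ι_desc, comps, Fin.cases_zero, π]
        rw [← Category.assoc, wf, zero_comp]
      | succ i =>
        simp only [ι, biproduct.ι_desc, comps, Fin.cases_succ, π]
        rw [← Category.assoc, hgh i, Category.assoc, w'', comp_zero]
    -- ι is mono
    haveI hmono : Mono ι := by
      apply Preadditive.mono_of_cancel_zero
      intro T t ht
      have hdec : t ≫ ι = (t ≫ biproduct.π _ 0) ≫ f +
          (biproduct.lift (fun i : Fin n => t ≫ biproduct.π _ i.succ)) ≫ ghat := by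
        conv_lhs => rw [show t = biproduct.lift (fun j => t ≫ biproduct.π _ j) from
          (by apply biproduct.hom_ext; intro j; simp)]
        rw [biproduct.lift_desc, Fin.sum_univ_succ, biproduct.lift_desc]
        simp [comps, ghat]
      have h0 : (t ≫ biproduct.π _ 0) ≫ f +
          (biproduct.lift (fun i : Fin n => t ≫ biproduct.π _ i.succ)) ≫ ghat = 0 := by
        rw [← hdec, ht]
      have h1 : (biproduct.lift (fun i : Fin n => t ≫ biproduct.π _ i.succ)) ≫ ι' = 0 := by
        have h0' := congrArg (fun x => x ≫ π') h0
        simp only [Preadditive.add_comp, zero_comp, Category.assoc, wf, comp_zero, zero_add,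
          hghat] at h0'
        exact h0'
      have h2 : biproduct.lift (fun i : Fin n => t ≫ biproduct.π _ i.succ) = 0 := by
        rw [← cancel_mono ι', h1, zero_comp]
      have h3 : ∀ i : Fin n, t ≫ biproduct.π _ i.succ = 0 := by
        intro i
        have := congrArg (fun x => x ≫ biproduct.π (fun _ : Fin n => A) i) h2
        simpa using this
      have h4 : t ≫ biproduct.π _ (0 : Fin (n + 1)) = 0 := by
        rw [h2, zero_comp, add_zero] at h0
        rw [← cancel_mono f, h0, zero_comp]
      apply biproduct.hom_ext
      intro j
      induction j using Fin.cases with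
      | zero => rw [h4, zero_comp]
      | succ i => rw [h3 i, zero_comp]
    -- ι is the kernel of π
    have hlim : IsLimit (KernelFork.ofι ι w) := by
      refine KernelFork.IsLimit.ofι' ι w (fun {T} t ht => ?_)
      have h1 : (t ≫ π') ≫ π'' = 0 := by
        rw [Category.assoc]; exact ht
      have hu := hSE'.exact.lift_f (t ≫ π') h1
      set u := hSE'.exact.lift (t ≫ π') h1 with hu_def
      have h2 : (t - u ≫ ghat) ≫ π' = 0 := by
        rw [Preadditive.sub_comp, Category.assoc, hghat, hu, sub_self]
      have hv := hexact1.lift_f (t - u ≫ ghat) h2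
      set v := hexact1.lift (t - u ≫ ghat) h2 with hv_def
      refine ⟨biproduct.lift (fun j : Fin (n + 1) =>
        Fin.cases v (fun i => u ≫ biproduct.π _ i) j), ?_⟩
      rw [show ι = biproduct.desc comps from rfl, biproduct.lift_desc, Fin.sum_univ_succ]
      simp only [Fin.cases_zero, Fin.cases_succ, comps]
      have hsum : ∑ i : Fin n, (u ≫ biproduct.π (fun _ : Fin n => A) i) ≫ gh i
          = u ≫ ghat := by
        have : ∀ i : Fin n, (u ≫ biproduct.π (fun _ : Fin n => A) i) ≫ gh i
            = u ≫ (biproduct.π (fun _ : Fin n => A) i ≫ biproduct.ι (fun _ : Fin n => A) i) ≫ ghat := by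
          intro i
          simp [ghat, Category.assoc]
        rw [Finset.sum_congr rfl (fun i _ => this i), ← Preadditive.comp_sum]
        rw [← Preadditive.sum_comp, biproduct.total, Category.id_comp]
      rw [hsum, hv]
      abel_nf
    have hexact : (ShortComplex.mk ι π w).Exact :=
      ShortComplex.exact_of_f_is_kernel _ hlim
    haveI : Epi π := by dsimp only [π]; infer_instance
    exact ⟨F, ι, π, w, ShortComplex.ShortExact.mk' hexact inferInstance inferInstance, hF⟩

end Aux

/-- Torsion-pair decomposition: if `A` is a simple object with scalar
endomorphisms such that every short exact sequence `0 → A^{⊕m} → X → A → 0`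
splits (encoding `Ext¹(A, A) = 0`), and `Hom(A, E)` is `n`-dimensional, then
there is a short exact sequence `0 → A^{⊕n} → E → F → 0` with `Hom(A, F) = 0`. -/
theorem stmt9 (k : Type*) [Field k] (C : Type*) [Category C] [Abelian C]
    [Linear k C] [HasFiniteBiproducts C] (A : C) [Simple A]
    (hA : ∀ f : A ⟶ A, ∃ c : k, f = c • 𝟙 A)
    (hsplit : ∀ (m : ℕ) (X : C) (i : (⨁ fun _ : Fin m => A) ⟶ X) (π : X ⟶ A)
      (w : i ≫ π = 0), (ShortComplex.mk i π w).ShortExact →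
        ∃ s : A ⟶ X, s ≫ π = 𝟙 A)
    (E : C) [FiniteDimensional k (A ⟶ E)] (n : ℕ)
    (hn : n = Module.finrank k (A ⟶ E)) :
    ∃ (F : C) (ι : (⨁ fun _ : Fin n => A) ⟶ E) (π : E ⟶ F) (w : ι ≫ π = 0),
      (ShortComplex.mk ι π w).ShortExact ∧ ∀ g : A ⟶ F, g = 0 :=
  stmt9_main hA hsplit n E hn
end
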